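/- Let f(x) = x² − x − 3, g(x) = x² − 5x + 5, and for n ≥ 2 let Pₙ(x) = det(Δₙ − xI) be the characteristic polynomial of the adjacency matrix Δₙ = aₙ + bₙ + cₙ. Then, as an identity of polynomials with rational coefficients, Pₙ(x) = −(x−3) · x^{αₙ} · (f(x))^{α_{n−1}} ⋯ (f^{n−1}(x))^{α₁} · (x+2)^{βₙ} · (g(x+2))^{β_{n−1}} ⋯ (g^{n−2}(x+2))^{β₂}, where αₘ = (3^{m−1}+3)/2 and βₘ = (3^{m−1}−1)/2. Moreover P₀(x) = −(x−3) and P₁(x) = −(x−3)x². -/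

import Mathlib

open Polynomial

/-- Generator matrix `aₙ` (size `3ⁿ × 3ⁿ`, indexed by ternary words of length `n`):
`a₀ = [1]`, `a_{n+1} = [[0ₙ,1ₙ,0ₙ],[1ₙ,0ₙ,0ₙ],[0ₙ,0ₙ,aₙ]]` in block form. -/
def hanoiGenA : (n : ℕ) → Matrix (Fin n → Fin 3) (Fin n → Fin 3) ℚ
  | 0 => 1
  | n + 1 => Matrix.of fun u v =>
      (![![0, 1, 0],
         ![1, 0, 0],
         ![0, 0, hanoiGenA n]] :
        Fin 3 → Fin 3 → Matrix (Fin n → Fin 3) (Fin n → Fin 3) ℚ)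
        (u 0) (v 0) (Fin.tail u) (Fin.tail v)

/-- `b₀ = [1]`, `b_{n+1} = [[0ₙ,0ₙ,1ₙ],[0ₙ,bₙ,0ₙ],[1ₙ,0ₙ,0ₙ]]`. -/
def hanoiGenB : (n : ℕ) → Matrix (Fin n → Fin 3) (Fin n → Fin 3) ℚ
  | 0 => 1
  | n + 1 => Matrix.of fun u v =>
      (![![0, 0, 1],
         ![0, hanoiGenB n, 0],
         ![1, 0, 0]] :
        Fin 3 → Fin 3 → Matrix (Fin n → Fin 3) (Fin n → Fin 3) ℚ)
        (u 0) (v 0) (Fin.tail u) (Fin.tail v)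

/-- `c₀ = [1]`, `c_{n+1} = [[cₙ,0ₙ,0ₙ],[0ₙ,0ₙ,1ₙ],[0ₙ,1ₙ,0ₙ]]`. -/
def hanoiGenC : (n : ℕ) → Matrix (Fin n → Fin 3) (Fin n → Fin 3) ℚ
  | 0 => 1
  | n + 1 => Matrix.of fun u v =>
      (![![hanoiGenC n, 0, 0],
         ![0, 0, 1],
         ![0, 1, 0]] :
        Fin 3 → Fin 3 → Matrix (Fin n → Fin 3) (Fin n → Fin 3) ℚ)
        (u 0) (v 0) (Fin.tail u) (Fin.tail v)

/-- The adjacency matrix `Δₙ = aₙ + bₙ + cₙ` of the level-`n` Schreier graph of the Hanoi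
Towers group on three pegs. -/
def hanoiAdj (n : ℕ) : Matrix (Fin n → Fin 3) (Fin n → Fin 3) ℚ :=
  hanoiGenA n + hanoiGenB n + hanoiGenC n

/-- `Pₙ(x) = det(Δₙ - x·I)`, the characteristic polynomial of `Δₙ` (in the sign convention
of the paper), as a polynomial with rational coefficients. -/
noncomputable def hanoiCharP (n : ℕ) : ℚ[X] :=
  Matrix.det ((hanoiAdj n).map C - (X : ℚ[X]) • 1)

/-- `f(X) = X² - X - 3` in `ℚ[X]`. -/
noncomputable def hanoiFpoly : ℚ[X] := X ^ 2 - X - 3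

/-- `g(X) = X² - 5X + 5` in `ℚ[X]`. -/
noncomputable def hanoiGpoly : ℚ[X] := X ^ 2 - 5 * X + 5

/-- The `k`-th iterate `f^k` of `f` under composition (`f⁰(X) = X`). -/
noncomputable def hanoiFiter : ℕ → ℚ[X]
  | 0 => X
  | k + 1 => hanoiFpoly.comp (hanoiFiter k)

/-- The `k`-th iterate `g^k` of `g` under composition (`g⁰(X) = X`). -/
noncomputable def hanoiGiter : ℕ → ℚ[X]
  | 0 => X
  | k + 1 => hanoiGpoly.comp (hanoiGiter k)

/-- `αₘ = (3^{m-1} + 3)/2`. -/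
def hanoiAlpha (m : ℕ) : ℕ := (3 ^ (m - 1) + 3) / 2

/-- `βₘ = (3^{m-1} - 1)/2`. -/
def hanoiBeta (m : ℕ) : ℕ := (3 ^ (m - 1) - 1) / 2

/-!
Split a word of length `n + 1` into its first letter and the rest. Then `Δₙ₊₁ - x` is the
3 × 3 block matrix with diagonal blocks `g - (x + 1)`, for the three generators `g` of level `n`,
plus the all-identity block matrix, which has rank `3ⁿ`. Each generator is an involution, so
`(g - s)⁻¹ = (g + s) / (1 - s²)`. The matrix determinant lemma therefore reduces
`det (Δₙ₊₁ - x)` to `∏ det (g - (x + 1))` times `det (Δₙ - f(x))`. Because the blocks of a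
single generator commute, the same block recursion gives
`det (g - s) = (1 - s) (s² - 1)^βₙ₊₁`. The result is
`(x + 2) Pₙ₊₁(x) = x^αₙ₊₁ (x + 2)^βₙ₊₁ Pₙ(f(x))`. The closed form satisfies the same
recursion, since `f^k ∘ f = f^(k+1)` and `(X + 2) ∘ f = g ∘ (X + 2)`.
-/

open Matrix

section BlocksByFirstLetter

variable (α R : Type*) [Fintype α] [DecidableEq α] [CommRing R]

noncomputable def blocksByFirstLetter (n : ℕ) :
    Matrix α α (Matrix (Fin n → α) (Fin n → α) R) ≃ₐ[R]
      Matrix (Fin (n + 1) → α) (Fin (n + 1) → α) R :=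
  (compAlgEquiv α (Fin n → α) R R).trans (reindexAlgEquiv R R (Fin.consEquiv fun _ => α))

variable {α R}

theorem blocksByFirstLetter_apply (n : ℕ) (M : Matrix α α (Matrix (Fin n → α) (Fin n → α) R))
    (u v : Fin (n + 1) → α) :
    blocksByFirstLetter α R n M u v = M (u 0) (v 0) (Fin.tail u) (Fin.tail v) :=
  rfl

theorem det_blocksByFirstLetter (n : ℕ) (M : Matrix α α (Matrix (Fin n → α) (Fin n → α) R)) :
    det (blocksByFirstLetter α R n M) = det (comp α α _ _ R M) := by
  rw [blocksByFirstLetter, AlgEquiv.trans_apply, coe_reindexAlgEquiv, compAlgEquiv_apply]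
  convert det_reindex_self _ _

theorem det_blocksByFirstLetter_map_aeval (n : ℕ) (g : Matrix (Fin n → α) (Fin n → α) R)
    (M : Matrix α α R[X]) :
    det (blocksByFirstLetter α R n (M.map (aeval g))) = det (aeval g M.det) := by
  rw [det_blocksByFirstLetter]
  exact (det_det M (aeval g).toRingHom).symm

theorem blocksByFirstLetter_map_aeval_sub_smul (n : ℕ) (g : Matrix (Fin n → α) (Fin n → α) R)
    (M : Matrix α α R[X]) (s : R) :
    blocksByFirstLetter α R n (M.map (aeval g)) - s • 1 =
      blocksByFirstLetter α R n ((M - s • 1).map (aeval g)) := by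
  rw [← AlgHom.mapMatrix_apply, ← AlgHom.mapMatrix_apply, map_sub, map_sub, map_smul, map_smul,
    map_one, map_one]

end BlocksByFirstLetter

section BlockDeterminants

variable {ι σ K : Type*} [Fintype ι] [DecidableEq ι] [Fintype σ] [DecidableEq σ] [CommRing K]

theorem det_comp_diagonal (D : ι → Matrix σ σ K) :
    det (comp ι ι σ σ K (diagonal D)) = ∏ i, det (D i) := by
  rw [comp_diagonal, det_reindex_self, det_blockDiagonal]

theorem det_one_add_comp_of (E : ι → Matrix σ σ K) :
    det (1 + comp ι ι σ σ K (of fun i _ => E i)) = det (1 + ∑ i, E i) := by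
  have h : comp ι ι σ σ K (of fun i _ => E i) =
      (of fun p : ι × σ => E p.1 p.2) * (1 : Matrix σ σ K).submatrix id Prod.snd := by
    ext ⟨i, u⟩ ⟨j, v⟩
    simp [mul_apply, one_apply]
  rw [h, det_one_add_mul_comm]
  congr 2
  ext u v
  simp [mul_apply, one_apply, Fintype.sum_prod_type, Matrix.sum_apply]

theorem det_comp_diagonal_add_ones {D E : ι → Matrix σ σ K} (hDE : ∀ i, D i * E i = 1) :
    det (comp ι ι σ σ K (diagonal D + of fun _ _ => 1)) =
      (∏ i, det (D i)) * det (1 + ∑ i, E i) := by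
  have h : diagonal D + of (fun _ _ => 1) = diagonal D * (1 + of fun i _ => E i) := by
    ext i j : 1
    by_cases h : i = j <;> simp [h, mul_add, hDE]
  rw [h, ← compRingEquiv_apply, map_mul, map_add, map_one, det_mul, compRingEquiv_apply,
    compRingEquiv_apply, det_comp_diagonal, det_one_add_comp_of]

theorem sub_smul_one_mul_add_smul_one {g : Matrix σ σ K} (hg : g * g = 1) (s : K) :
    (g - s • 1) * (g + s • 1) = (1 - s ^ 2) • 1 := by
  rw [sub_mul, mul_add, mul_add, hg]
  simp only [Matrix.mul_smul, Matrix.smul_mul, Matrix.mul_one, Matrix.one_mul, smul_smul]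
  module

theorem eval_det_map_C_sub_X_smul (M : Matrix σ σ K) (x : K) :
    (det (M.map C - (X : K[X]) • 1)).eval x = det (M - x • 1) := by
  rw [← coe_evalRingHom, RingHom.map_det]
  congr 1
  ext i j
  by_cases h : i = j <;> simp [h]

end BlockDeterminants

theorem comp_eq_succ_of_iterate {R : Type*} [CommSemiring R] {p : R[X]} {q : ℕ → R[X]}
    (h0 : q 0 = X) (hsucc : ∀ k, q (k + 1) = p.comp (q k)) (k : ℕ) :
    (q k).comp p = q (k + 1) := by
  induction k with
  | zero => rw [h0, X_comp, hsucc, h0, comp_X]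
  | succ k ih => rw [hsucc k, comp_assoc, ih, hsucc (k + 1)]

theorem two_mul_hanoiBeta_succ_add_one (n : ℕ) : 2 * hanoiBeta (n + 1) + 1 = 3 ^ n := by
  have h : Odd (3 ^ n) := Odd.pow (by decide)
  rw [hanoiBeta, Nat.add_sub_cancel]
  grind

theorem hanoiAlpha_succ (n : ℕ) : hanoiAlpha (n + 1) = hanoiBeta (n + 1) + 2 := by
  have h := two_mul_hanoiBeta_succ_add_one n
  rw [hanoiAlpha, Nat.add_sub_cancel]
  omega

theorem hanoiBeta_succ_succ (n : ℕ) : hanoiBeta (n + 1 + 1) = 3 ^ n + hanoiBeta (n + 1) := by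
  have h0 := two_mul_hanoiBeta_succ_add_one n
  have h1 := two_mul_hanoiBeta_succ_add_one (n + 1)
  rw [pow_succ] at h1
  omega

/-- `hanoiGen k` is the generator fixing peg `k`: `c`, `b`, `a` for `k = 0, 1, 2`. -/
def hanoiGen (k : Fin 3) (n : ℕ) : Matrix (Fin n → Fin 3) (Fin n → Fin 3) ℚ :=
  ![hanoiGenC n, hanoiGenB n, hanoiGenA n] k

theorem hanoiGen_zero (k : Fin 3) : hanoiGen k 0 = 1 := by
  fin_cases k <;> rfl

/-- The first-letter block pattern of `hanoiGen k (n + 1)`, with `X` standing for `hanoiGen k n`. -/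
noncomputable def hanoiPattern (k : Fin 3) : Matrix (Fin 3) (Fin 3) ℚ[X] :=
  of fun i j => if i = k ∧ j = k then X else if i ≠ j ∧ i ≠ k ∧ j ≠ k then 1 else 0

theorem hanoiPattern_map (k : Fin 3) {n : ℕ} (h : Matrix (Fin n → Fin 3) (Fin n → Fin 3) ℚ) :
    (hanoiPattern k).map (aeval h) =
      of fun i j => if i = k ∧ j = k then h else if i ≠ j ∧ i ≠ k ∧ j ≠ k then 1 else 0 := by
  ext i j : 1
  simp only [hanoiPattern, map_apply, of_apply]
  split_ifs <;> simp

theorem hanoiPattern_mul_self (k : Fin 3) :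
    hanoiPattern k * hanoiPattern k = diagonal fun i => if i = k then X ^ 2 else 1 := by
  ext i j : 1
  fin_cases k <;> fin_cases i <;> fin_cases j <;>
    simp [hanoiPattern, mul_apply, Fin.sum_univ_three, sq]

theorem det_hanoiPattern_sub_smul (k : Fin 3) (s : ℚ) :
    det (hanoiPattern k - s • 1) = (s ^ 2 - 1) • (X - C s) := by
  fin_cases k <;> simp [hanoiPattern, det_fin_three, one_apply, smul_eq_C_mul] <;> ring

theorem hanoiGen_succ (k : Fin 3) (n : ℕ) :
    hanoiGen k (n + 1) =
      blocksByFirstLetter (Fin 3) ℚ n ((hanoiPattern k).map (aeval (hanoiGen k n))) := by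
  rw [hanoiPattern_map]
  ext u v
  rw [blocksByFirstLetter_apply]
  induction u using Fin.consCases with | cons i u => ?_
  induction v using Fin.consCases with | cons j v => ?_
  fin_cases k <;> fin_cases i <;> fin_cases j <;> rfl

theorem hanoiGen_mul_self (k : Fin 3) : ∀ n, hanoiGen k n * hanoiGen k n = 1
  | 0 => by rw [hanoiGen_zero, mul_one]
  | n + 1 => by
    rw [hanoiGen_succ, ← map_mul, ← AlgHom.mapMatrix_apply, ← map_mul, hanoiPattern_mul_self,
      AlgHom.mapMatrix_apply, diagonal_map (map_zero _)]
    simp [apply_ite, sq, hanoiGen_mul_self k n]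

theorem det_hanoiGen_sub_smul (k : Fin 3) (s : ℚ) :
    ∀ n, det (hanoiGen k n - s • 1) = (1 - s) * (s ^ 2 - 1) ^ hanoiBeta (n + 1)
  | 0 => by simp [hanoiGen_zero, det_unique, hanoiBeta]
  | n + 1 => by
    rw [hanoiGen_succ, blocksByFirstLetter_map_aeval_sub_smul, det_blocksByFirstLetter_map_aeval,
      det_hanoiPattern_sub_smul, map_smul, map_sub, aeval_X, aeval_C,
      Algebra.algebraMap_eq_smul_one, det_smul, det_hanoiGen_sub_smul k s n,
      Fintype.card_fun, Fintype.card_fin, Fintype.card_fin, hanoiBeta_succ_succ]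
    ring

theorem hanoiAdj_eq_sum (n : ℕ) : hanoiAdj n = ∑ k, hanoiGen k n := by
  rw [hanoiAdj, Fin.sum_univ_three]
  show _ = hanoiGenC n + hanoiGenB n + hanoiGenA n
  abel

theorem hanoiAdj_succ_sub_smul (n : ℕ) (x : ℚ) :
    hanoiAdj (n + 1) - x • 1 = blocksByFirstLetter (Fin 3) ℚ n
      (diagonal (fun k => hanoiGen k n - (x + 1) • 1) + of fun _ _ => 1) := by
  simp_rw [hanoiAdj_eq_sum, hanoiGen_succ, ← map_sum, ← map_one (blocksByFirstLetter (Fin 3) ℚ n),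
    ← map_smul, ← map_sub]
  congr 1
  ext i j : 1
  fin_cases i <;> fin_cases j <;> simp [hanoiPattern_map, Fin.sum_univ_three, one_apply] <;> module

theorem det_hanoiAdj_succ_sub_smul (n : ℕ) {x : ℚ} (hx : x ≠ 0) (hx2 : x + 2 ≠ 0) :
    (x + 2) * det (hanoiAdj (n + 1) - x • 1) =
      x ^ hanoiAlpha (n + 1) * (x + 2) ^ hanoiBeta (n + 1) *
        det (hanoiAdj n - (x ^ 2 - x - 3) • 1) := by
  -- with `s = x + 1`, `c = (1 - s²)⁻¹` and `(g - s)⁻¹ = c (g + s)` for each generator `g`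
  set c := (-(x * (x + 2)))⁻¹
  have hc : c * -(x * (x + 2)) = 1 := inv_mul_cancel₀ (neg_ne_zero.mpr (mul_ne_zero hx hx2))
  have hinv : ∀ k, (hanoiGen k n - (x + 1) • 1) * (c • (hanoiGen k n + (x + 1) • 1)) = 1 := by
    intro k
    rw [Matrix.mul_smul, sub_smul_one_mul_add_smul_one (hanoiGen_mul_self k n), smul_smul]
    linear_combination (norm := module) hc • (1 : Matrix (Fin n → Fin 3) (Fin n → Fin 3) ℚ)
  have hsum : 1 + ∑ k, c • (hanoiGen k n + (x + 1) • 1) =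
      c • (hanoiAdj n - (x ^ 2 - x - 3) • 1) := by
    rw [← Finset.smul_sum, Finset.sum_add_distrib, ← hanoiAdj_eq_sum, Finset.sum_const,
      Finset.card_univ, Fintype.card_fin]
    linear_combination (norm := module) -(hc • (1 : Matrix (Fin n → Fin 3) (Fin n → Fin 3) ℚ))
  have hscalar : (x + 2) * (((1 - (x + 1)) * ((x + 1) ^ 2 - 1) ^ hanoiBeta (n + 1)) ^ 3 *
      c ^ (2 * hanoiBeta (n + 1) + 1)) =
        x ^ (hanoiBeta (n + 1) + 2) * (x + 2) ^ hanoiBeta (n + 1) := by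
    have hodd : (-1 : ℚ) ^ (2 * hanoiBeta (n + 1) + 1) = -1 := Odd.neg_one_pow ⟨_, rfl⟩
    rw [show (x + 1) ^ 2 - 1 = x * (x + 2) by ring, inv_pow, neg_pow, hodd]
    simp only [mul_pow, ← pow_mul]
    field_simp
    ring
  rw [hanoiAdj_succ_sub_smul, det_blocksByFirstLetter, det_comp_diagonal_add_ones hinv, hsum,
    det_smul]
  simp_rw [det_hanoiGen_sub_smul]
  rw [Finset.prod_const, Finset.card_univ, Fintype.card_fin, Fintype.card_fun, Fintype.card_fin,
    Fintype.card_fin, ← two_mul_hanoiBeta_succ_add_one, hanoiAlpha_succ]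
  linear_combination det (hanoiAdj n - (x ^ 2 - x - 3) • 1) * hscalar

theorem hanoiCharP_zero : hanoiCharP 0 = -(X - 3) := by
  rw [hanoiCharP, det_unique]
  simp [hanoiAdj, hanoiGenA, hanoiGenB, hanoiGenC]
  ring

theorem hanoiCharP_succ (n : ℕ) :
    (X + 2) * hanoiCharP (n + 1) =
      X ^ hanoiAlpha (n + 1) * (X + 2) ^ hanoiBeta (n + 1) * (hanoiCharP n).comp hanoiFpoly := by
  refine eq_of_infinite_eval_eq _ _ (({0, -2} : Set ℚ).toFinite.infinite_compl.mono ?_)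
  intro x hx
  simp only [Set.mem_compl_iff, Set.mem_insert_iff, Set.mem_singleton_iff, not_or] at hx
  simp only [Set.mem_ofPred_eq, eval_mul, eval_pow, eval_add, eval_X, eval_ofNat, eval_comp,
    hanoiCharP, eval_det_map_C_sub_X_smul, hanoiFpoly, eval_sub]
  exact det_hanoiAdj_succ_sub_smul n hx.1 (by grind)

theorem hanoiGiter_comp_X_add_two_comp (k : ℕ) :
    ((hanoiGiter k).comp (X + 2)).comp hanoiFpoly = (hanoiGiter (k + 1)).comp (X + 2) := by
  have hconj : (X + 2 : ℚ[X]).comp hanoiFpoly = hanoiGpoly.comp (X + 2) := by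
    simp only [hanoiFpoly, hanoiGpoly, add_comp, X_comp, ofNat_comp, sub_comp, pow_comp,
      mul_comp]
    ring
  rw [comp_assoc, hconj, ← comp_assoc,
    comp_eq_succ_of_iterate (q := hanoiGiter) rfl (fun _ => rfl)]

/-- The right-hand side as a single product: its extra factor `k = n - 1` has exponent `β₁ = 0`. -/
noncomputable def hanoiClosedForm (n : ℕ) : ℚ[X] :=
  -(X - 3) * ∏ k ∈ Finset.range n,
    hanoiFiter k ^ hanoiAlpha (n - k) * ((hanoiGiter k).comp (X + 2)) ^ hanoiBeta (n - k)

theorem hanoiClosedForm_succ (n : ℕ) :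
    (X + 2) * hanoiClosedForm (n + 1) =
      X ^ hanoiAlpha (n + 1) * (X + 2) ^ hanoiBeta (n + 1) *
        (hanoiClosedForm n).comp hanoiFpoly := by
  simp only [hanoiClosedForm, Finset.prod_range_succ', mul_comp, neg_comp, sub_comp, X_comp,
    ofNat_comp, prod_comp, pow_comp, Nat.succ_sub_succ, Nat.sub_zero,
    comp_eq_succ_of_iterate (q := hanoiFiter) rfl (fun _ => rfl),
    hanoiGiter_comp_X_add_two_comp]
  simp only [hanoiFiter, hanoiGiter, X_comp, hanoiFpoly]
  ring

theorem hanoiCharP_eq_closedForm (n : ℕ) : hanoiCharP n = hanoiClosedForm n := by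
  induction n with
  | zero => simp [hanoiCharP_zero, hanoiClosedForm]
  | succ n ih =>
    have h2 : (X + 2 : ℚ[X]) ≠ 0 := C_ofNat (R := ℚ) 2 ▸ X_add_C_ne_zero 2
    exact mul_left_cancel₀ h2 (by rw [hanoiCharP_succ, hanoiClosedForm_succ, ih])

theorem hanoiClosedForm_eq (n : ℕ) :
    hanoiClosedForm n = -(X - 3) * (∏ k ∈ Finset.range n, hanoiFiter k ^ hanoiAlpha (n - k)) *
      ∏ k ∈ Finset.range (n - 1), ((hanoiGiter k).comp (X + 2)) ^ hanoiBeta (n - k) := by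
  rw [hanoiClosedForm, Finset.prod_mul_distrib, mul_assoc]
  congr 2
  cases n with
  | zero => rfl
  | succ n => simp [Finset.prod_range_succ _ n, hanoiBeta]

/-- The factorization of the characteristic polynomial of the adjacency matrix of the
level-`n` Schreier graph of the Hanoi Towers group on three pegs: for `n ≥ 2`,
`Pₙ(x) = -(x-3)·x^{αₙ}·f(x)^{α_{n-1}} ⋯ f^{n-1}(x)^{α₁} ·
(x+2)^{βₙ}·g(x+2)^{β_{n-1}} ⋯ g^{n-2}(x+2)^{β₂}`,
as an identity in `ℚ[X]`; moreover `P₀(x) = -(x-3)` and `P₁(x) = -(x-3)x²`. -/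
theorem hanoiCharP_factorization :
    (∀ n : ℕ, 2 ≤ n →
      hanoiCharP n =
        -(X - 3) * (∏ k ∈ Finset.range n, hanoiFiter k ^ hanoiAlpha (n - k)) *
          ∏ k ∈ Finset.range (n - 1),
            ((hanoiGiter k).comp (X + 2)) ^ hanoiBeta (n - k)) ∧
    hanoiCharP 0 = -(X - 3) ∧ hanoiCharP 1 = -(X - 3) * X ^ 2 := by
  refine ⟨fun n _ => ?_, ?_, ?_⟩ <;> rw [hanoiCharP_eq_closedForm]
  · exact hanoiClosedForm_eq n
  · simp [hanoiClosedForm]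
  · simp [hanoiClosedForm, hanoiFiter, hanoiAlpha, hanoiBeta]
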